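/- arXiv:1001.3894 — 5 statements merged into one kernel-verified Lean document; each statement's English description precedes it below -/
import Mathlib

section
/- Let Γ' be the subgroup of GL₃(ℤ) generated by the three matrices g₁ = [[1,-4,4],[0,-1,2],[0,0,1]], g₂ = [[1,0,0],[0,-1,0],[0,0,1]], g₃ = [[1,0,0],[2,-1,0],[4,-4,1]]. For an integer matrix M = [[α,β],[γ,δ]] with αδ−βγ = ±1, define ρ(M) = (1/(αδ−βγ))·[[α², 2αγ, γ²],[αβ, αδ+βγ, γδ],[β², 2βδ, δ²]] (a matrix with integer entries). Then ρ(M) ∈ Γ' if and only if αδ−βγ = 1 and both β and γ are even. (That is, the preimage of Γ̃ = Γ' ∩ SO_Δ(ℤ) under the spin homomorphism ρ: PGL₂(ℤ) → SO_Δ(ℤ) is exactly the principal congruence subgroup Λ(2) of PSL₂(ℤ).) -/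
open Matrix

def gammaG1 : Matrix (Fin 3) (Fin 3) ℤ := !![1,-4,4; 0,-1,2; 0,0,1]
def gammaG2 : Matrix (Fin 3) (Fin 3) ℤ := !![1,0,0; 0,-1,0; 0,0,1]
def gammaG3 : Matrix (Fin 3) (Fin 3) ℤ := !![1,0,0; 2,-1,0; 4,-4,1]

/-- The group `Γ'`, generated by the three involutions `g₁, g₂, g₃`.
Since each generator is an involution, the submonoid they generate coincides
(as a set of matrices) with the group they generate. -/
def gammaPrime : Submonoid (Matrix (Fin 3) (Fin 3) ℤ) :=
  Submonoid.closure {gammaG1, gammaG2, gammaG3}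

/-- The spin homomorphism `ρ : PGL₂(ℤ) → SO_Δ(ℤ)` applied to `M = [[α,β],[γ,δ]]`
with `αδ - βγ = ±1`; since `1/(±1) = ±1`, the prefactor `1/(αδ-βγ)` is the
integer scalar `αδ - βγ`. -/
def spinRho (α β γ δ : ℤ) : Matrix (Fin 3) (Fin 3) ℤ :=
  (α * δ - β * γ) •
    !![α ^ 2, 2 * α * γ, γ ^ 2;
       α * β, α * δ + β * γ, γ * δ;
       β ^ 2, 2 * β * δ, δ ^ 2]

/-!
`ρ` is an anti-homomorphism, `ρ(M) ρ(N) = ρ(N M)`, and it sends the unipotent matrices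
`[[1, ±2], [0, 1]]` and `[[1, 0], [±2, 1]]` to `g₃g₂, g₂g₃, g₁g₂, g₂g₁`, and `-I` to `1`. These
matrices generate `Λ(2)`: a Euclidean algorithm on the first column `(α, γ)` of `M ∈ Λ(2)`
reduces it to `(±1, 0)`, each step strictly decreasing `|α| + |γ|` because `α` is odd and `γ`
even. Hence `ρ(Λ(2)) ⊆ Γ'`.

Conversely, modulo 4 every generator of `Γ'` has first row `(1, 0, 0)` and last row `(0, 0, 1)`,
hence so does every element of `Γ'`. For `ρ(M)` these rows are `det M • (α², 2αγ, γ²)` and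
`det M • (β², 2βδ, δ²)`; as squares are `0` or `1` modulo 4, this forces `det M = 1` and
`β, γ` even.
-/

section RowStabilizer

variable {n R : Type*} [Fintype n] [DecidableEq n] [Semiring R]

def Matrix.rowStabilizer (v : n → R) : Submonoid (Matrix n n R) where
  carrier := {X | v ᵥ* X = v}
  mul_mem' {X Y} (hX : v ᵥ* X = v) (hY : v ᵥ* Y = v) := by
    rw [Set.mem_ofPred_eq, ← vecMul_vecMul, hX, hY]
  one_mem' := vecMul_one v

theorem Matrix.mem_rowStabilizer {v : n → R} {X : Matrix n n R} :
    X ∈ rowStabilizer v ↔ v ᵥ* X = v :=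
  Iff.rfl

end RowStabilizer

theorem Int.induction_on_two_dvd {p : ℤ → Prop} (zero : p 0) (add_two : ∀ n, p n → p (n + 2))
    (sub_two : ∀ n, p n → p (n - 2)) {n : ℤ} (hn : 2 ∣ n) : p n := by
  obtain ⟨k, rfl⟩ := hn
  induction k using Int.induction_on with
  | zero => simpa using zero
  | succ k ih => simpa [mul_add] using add_two _ ih
  | pred k ih => simpa [mul_sub] using sub_two _ ih

theorem exists_natAbs_sub_two_mul_lt {a b : ℤ} (hb : b ≠ 0) (hab : ¬ 2 ∣ a - b) :
    ∃ k : ℤ, (a - 2 * k * b).natAbs < b.natAbs := by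
  have hm : 0 < (2 * b).natAbs := by omega
  obtain ⟨k, hk⟩ := Int.natAbs_dvd.mp (Int.dvd_bmod_sub_self (x := a) (m := (2 * b).natAbs))
  have h_lower := Int.le_bmod (x := a) hm
  have h_upper := Int.bmod_lt (x := a) hm
  refine ⟨-k, ?_⟩
  rw [show a - 2 * -k * b = a + 2 * (b * k) by ring]
  rw [mul_assoc] at hk
  generalize b * k = t at hk ⊢
  omega

theorem two_dvd_of_sq_eq_zero {b : ℤ} (h : (b : ZMod 4) ^ 2 = 0) : 2 ∣ b := by
  rw [← Int.cast_pow, ZMod.intCast_zmod_eq_zero_iff_dvd] at h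
  exact (Int.pow_dvd_pow_iff two_ne_zero).mp (by simpa using h)

theorem neg_sq_ne_one_zmod_four (x : ZMod 4) : -x ^ 2 ≠ 1 := by
  revert x; decide

section SpinRho

theorem spinRho_mul (a b c d a' b' c' d' : ℤ) :
    spinRho a b c d * spinRho a' b' c' d' =
      spinRho (a' * a + b' * c) (a' * b + b' * d) (c' * a + d' * c) (c' * b + d' * d) := by
  ext i j
  fin_cases i <;> fin_cases j <;>
    simp [spinRho, Matrix.mul_apply, Fin.sum_univ_three] <;> ring

theorem spinRho_one : spinRho 1 0 0 1 = 1 := by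
  simp [spinRho, one_fin_three]

theorem spinRho_neg (a b c d : ℤ) : spinRho (-a) (-b) (-c) (-d) = spinRho a b c d := by
  simp [spinRho]

theorem spinRho_eq_mul_spinRho_upper (α β γ δ n : ℤ) :
    spinRho α β γ δ = spinRho (α - n * γ) (β - n * δ) γ δ * spinRho 1 n 0 1 := by
  rw [spinRho_mul]; ring_nf

theorem spinRho_eq_mul_spinRho_lower (α β γ δ n : ℤ) :
    spinRho α β γ δ = spinRho α β (γ - n * α) (δ - n * β) * spinRho 1 0 n 1 := by
  rw [spinRho_mul]; ring_nf

theorem spinRho_one_two_zero_one : spinRho 1 2 0 1 = gammaG3 * gammaG2 := by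
  norm_num [spinRho, gammaG2, gammaG3, Matrix.mul_fin_three]

theorem spinRho_one_neg_two_zero_one : spinRho 1 (-2) 0 1 = gammaG2 * gammaG3 := by
  norm_num [spinRho, gammaG2, gammaG3, Matrix.mul_fin_three]

theorem spinRho_one_zero_two_one : spinRho 1 0 2 1 = gammaG1 * gammaG2 := by
  norm_num [spinRho, gammaG1, gammaG2, Matrix.mul_fin_three]

theorem spinRho_one_zero_neg_two_one : spinRho 1 0 (-2) 1 = gammaG2 * gammaG1 := by
  norm_num [spinRho, gammaG1, gammaG2, Matrix.mul_fin_three]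

end SpinRho

section Lambda2ToGammaPrime

theorem gammaG1_mem : gammaG1 ∈ gammaPrime := Submonoid.subset_closure (by simp)

theorem gammaG2_mem : gammaG2 ∈ gammaPrime := Submonoid.subset_closure (by simp)

theorem gammaG3_mem : gammaG3 ∈ gammaPrime := Submonoid.subset_closure (by simp)

theorem spinRho_upper_mem {β : ℤ} (hβ : 2 ∣ β) : spinRho 1 β 0 1 ∈ gammaPrime := by
  refine Int.induction_on_two_dvd (p := fun β => spinRho 1 β 0 1 ∈ gammaPrime) ?_ ?_ ?_ hβ
  · rw [spinRho_one]; exact one_mem _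
  · intro n hn
    rw [spinRho_eq_mul_spinRho_upper _ _ _ _ 2]
    simpa [spinRho_one_two_zero_one] using mul_mem hn (mul_mem gammaG3_mem gammaG2_mem)
  · intro n hn
    rw [spinRho_eq_mul_spinRho_upper _ _ _ _ (-2)]
    simpa [spinRho_one_neg_two_zero_one] using mul_mem hn (mul_mem gammaG2_mem gammaG3_mem)

theorem spinRho_lower_mem {γ : ℤ} (hγ : 2 ∣ γ) : spinRho 1 0 γ 1 ∈ gammaPrime := by
  refine Int.induction_on_two_dvd (p := fun γ => spinRho 1 0 γ 1 ∈ gammaPrime) ?_ ?_ ?_ hγ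
  · rw [spinRho_one]; exact one_mem _
  · intro n hn
    rw [spinRho_eq_mul_spinRho_lower _ _ _ _ 2]
    simpa [spinRho_one_zero_two_one] using mul_mem hn (mul_mem gammaG1_mem gammaG2_mem)
  · intro n hn
    rw [spinRho_eq_mul_spinRho_lower _ _ _ _ (-2)]
    simpa [spinRho_one_zero_neg_two_one] using mul_mem hn (mul_mem gammaG2_mem gammaG1_mem)

theorem spinRho_mem_gammaPrime_of_two_dvd {α β γ δ : ℤ} (hdet : α * δ - β * γ = 1) (hβ : 2 ∣ β)
    (hγ : 2 ∣ γ) : spinRho α β γ δ ∈ gammaPrime := by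
  induction h : α.natAbs + γ.natAbs using Nat.strong_induction_on generalizing α β γ δ with
  | _ N ih =>
  have hα : ¬ 2 ∣ α := fun hα => by
    simpa [hdet] using dvd_sub (hα.mul_right δ) (hγ.mul_left β)
  rcases eq_or_ne γ 0 with rfl | hγ0
  · rcases Int.mul_eq_one_iff_eq_one_or_neg_one.mp (by simpa using hdet) with
      ⟨rfl, rfl⟩ | ⟨rfl, rfl⟩
    · exact spinRho_upper_mem hβ
    · simpa [← spinRho_neg 1 (-β)] using spinRho_upper_mem (dvd_neg.mpr hβ)
  rcases lt_or_ge α.natAbs γ.natAbs with hlt | hge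
  · obtain ⟨k, hk⟩ := exists_natAbs_sub_two_mul_lt (a := γ) (b := α) (by omega) (by omega)
    rw [spinRho_eq_mul_spinRho_lower α β γ δ (2 * k)]
    refine mul_mem (ih _ (by omega) (by linear_combination hdet) hβ ?_ rfl)
      (spinRho_lower_mem (dvd_mul_right 2 k))
    exact dvd_sub hγ ((dvd_mul_right 2 k).mul_right α)
  · obtain ⟨k, hk⟩ := exists_natAbs_sub_two_mul_lt (a := α) (b := γ) hγ0 (by omega)
    rw [spinRho_eq_mul_spinRho_upper α β γ δ (2 * k)]
    refine mul_mem (ih _ (by omega) (by linear_combination hdet) ?_ hγ rfl)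
      (spinRho_upper_mem (dvd_mul_right 2 k))
    exact dvd_sub hβ ((dvd_mul_right 2 k).mul_right δ)

end Lambda2ToGammaPrime

section GammaPrimeModFour

def outerRowsFixedModFour : Submonoid (Matrix (Fin 3) (Fin 3) ℤ) :=
  (rowStabilizer (Pi.single 0 1) ⊓ rowStabilizer (Pi.single 2 1)).comap
    (Int.castRingHom (ZMod 4)).mapMatrix

theorem gammaPrime_le_outerRowsFixedModFour : gammaPrime ≤ outerRowsFixedModFour := by
  refine Submonoid.closure_le.mpr ?_
  simp only [Set.insert_subset_iff, Set.singleton_subset_iff, SetLike.mem_coe,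
    outerRowsFixedModFour, Submonoid.mem_comap, Submonoid.mem_inf, mem_rowStabilizer]
  refine ⟨⟨?_, ?_⟩, ⟨?_, ?_⟩, ⟨?_, ?_⟩⟩ <;> decide

theorem det_eq_one_and_two_dvd_of_spinRho_mem {α β γ δ : ℤ}
    (hdet : α * δ - β * γ = 1 ∨ α * δ - β * γ = -1)
    (h : spinRho α β γ δ ∈ outerRowsFixedModFour) :
    α * δ - β * γ = 1 ∧ 2 ∣ β ∧ 2 ∣ γ := by
  simp only [outerRowsFixedModFour, Submonoid.mem_comap, Submonoid.mem_inf, mem_rowStabilizer,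
    single_one_vecMul] at h
  rcases hdet with he | he
  · exact ⟨he, two_dvd_of_sq_eq_zero (by simpa [spinRho, he] using congrFun h.2 0),
      two_dvd_of_sq_eq_zero (by simpa [spinRho, he] using congrFun h.1 2)⟩
  · exact absurd (by simpa [spinRho, he] using congrFun h.1 0) (neg_sq_ne_one_zmod_four α)

end GammaPrimeModFour

/-- The preimage of `Γ̃ = Γ' ∩ SO_Δ(ℤ)` under the spin homomorphism `ρ` is exactly
the principal congruence subgroup `Λ(2)` of `PSL₂(ℤ)`: for `M ∈ GL₂(ℤ)`,
`ρ(M) ∈ Γ'` if and only if `det M = 1` and `β, γ` are both even. -/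
theorem preimage_of_gammaPrime_is_lambda_two (α β γ δ : ℤ)
    (hdet : α * δ - β * γ = 1 ∨ α * δ - β * γ = -1) :
    spinRho α β γ δ ∈ gammaPrime ↔ (α * δ - β * γ = 1 ∧ 2 ∣ β ∧ 2 ∣ γ) :=
  ⟨fun h => det_eq_one_and_two_dvd_of_spinRho_mem hdet (gammaPrime_le_outerRowsFixedModFour h),
    fun ⟨h1, hβ, hγ⟩ => spinRho_mem_gammaPrime_of_two_dvd h1 hβ hγ⟩
end

section
/- Let (a,b,c,d) ∈ ℤ⁴ satisfy Q(a,b,c,d) = 0, and let f_a(x,y) = (a+b)x² + (a+b+d−c)xy + (a+d)y². Then for every pair of coprime integers (x,y), there exists an element γ of the subgroup A₁ of GL₄(ℤ) generated by S₂, S₃, S₄ such that the vector γ·(a,b,c,d)ᵀ has first coordinate equal to a and has some coordinate i ∈ {2,3,4} equal to f_a(x,y) − a. (Hence every integer of the form f_a(x,y) − a with gcd(x,y) = 1 occurs as a curvature of a circle tangent to the fixed circle of curvature a in the packing.) -/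
open Matrix

/-- The Descartes quadratic form `Q(a,b,c,d) = 2(a²+b²+c²+d²) - (a+b+c+d)²`. -/
def descartesQ (a b c d : ℤ) : ℤ :=
  2 * (a ^ 2 + b ^ 2 + c ^ 2 + d ^ 2) - (a + b + c + d) ^ 2

def apS2 : Matrix (Fin 4) (Fin 4) ℤ := !![1,0,0,0; 2,-1,2,2; 0,0,1,0; 0,0,0,1]
def apS3 : Matrix (Fin 4) (Fin 4) ℤ := !![1,0,0,0; 0,1,0,0; 2,2,-1,2; 0,0,0,1]
def apS4 : Matrix (Fin 4) (Fin 4) ℤ := !![1,0,0,0; 0,1,0,0; 0,0,1,0; 2,2,2,-1]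

/-- The subgroup `A₁` of the Apollonian group, generated by the involutions
`S₂, S₃, S₄` (it fixes the first coordinate). Since each generator is an
involution, the submonoid they generate coincides (as a set of matrices) with
the group they generate. -/
def apolloA1 : Submonoid (Matrix (Fin 4) (Fin 4) ℤ) :=
  Submonoid.closure {apS2, apS3, apS4}


/-!
Write `f` for the shifted form `f_a - a` on `ℤ²`. It satisfies the parallelogram law
`f (u + v) + f (u - v) = 2 f u + 2 f v + 2 a`, and this is exactly the rule by which each of
`S₂, S₃, S₄` replaces one coordinate of a vector `(a, f u, f (u + v), f v)`. So whenever the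
orbit `A₁ · (a, b, c, d)` contains such a vector, it also contains the ones obtained by the
moves `(u, v) ↦ (u + 2v, -v), (u, -v), (-u, 2u + v)`. Starting from `S₃ · (a, b, c, d)`, which
is the vector of `(e₁, e₂)`, a Euclidean descent on first coordinates reaches every basis
`(u, v)` of `ℤ²` with `u ≡ e₁` and `v ≡ e₂` mod 2, and every primitive vector of `ℤ²` is
`u`, `v` or `u + v` for such a basis, according to its class mod 2.
-/

namespace Apollonian

lemma apS2_mem : apS2 ∈ apolloA1 := Submonoid.subset_closure (by simp)
lemma apS3_mem : apS3 ∈ apolloA1 := Submonoid.subset_closure (by simp)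
lemma apS4_mem : apS4 ∈ apolloA1 := Submonoid.subset_closure (by simp)

lemma apS2_mulVec (a p q r : ℤ) :
    apS2 *ᵥ ![a, p, q, r] = ![a, 2 * a - p + 2 * q + 2 * r, q, r] := by
  ext i; fin_cases i <;> simp [apS2, mulVec, dotProduct, Fin.sum_univ_four]; ring

lemma apS3_mulVec (a p q r : ℤ) :
    apS3 *ᵥ ![a, p, q, r] = ![a, p, 2 * a + 2 * p - q + 2 * r, r] := by
  ext i; fin_cases i <;> simp [apS3, mulVec, dotProduct, Fin.sum_univ_four]; ring

lemma apS4_mulVec (a p q r : ℤ) :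
    apS4 *ᵥ ![a, p, q, r] = ![a, p, q, 2 * a + 2 * p + 2 * q - r] := by
  ext i; fin_cases i <;> simp [apS4, mulVec, dotProduct, Fin.sum_univ_four]; ring

lemma exists_natAbs_add_two_mul_le (x : ℤ) {m : ℤ} (hm : m ≠ 0) :
    ∃ k : ℤ, (x + 2 * k * m).natAbs ≤ m.natAbs := by
  refine ⟨-((x + m.natAbs) / (2 * m)), ?_⟩
  have h := Int.emod_def (x + m.natAbs) (2 * m)
  have h₀ := Int.emod_nonneg (x + m.natAbs) (by omega : 2 * m ≠ 0)
  have h₁ := Int.emod_lt (x + m.natAbs) (by omega : 2 * m ≠ 0)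
  set q := (x + m.natAbs) / (2 * m)
  have : x + 2 * -q * m = (x + m.natAbs) % (2 * m) - m.natAbs := by linear_combination -h
  omega

def shiftedForm (a b c d : ℤ) (w : ℤ × ℤ) : ℤ :=
  ((a + b) * w.1 ^ 2 + (a + b + d - c) * w.1 * w.2 + (a + d) * w.2 ^ 2) - a

@[simp]
lemma shiftedForm_neg (a b c d : ℤ) (w : ℤ × ℤ) :
    shiftedForm a b c d (-w) = shiftedForm a b c d w := by
  simp only [shiftedForm, Prod.fst_neg, Prod.snd_neg]; ring

lemma shiftedForm_parallelogram_law (a b c d : ℤ) (u v : ℤ × ℤ) :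
    shiftedForm a b c d (u + v) + shiftedForm a b c d (u - v) =
      2 * a + 2 * shiftedForm a b c d u + 2 * shiftedForm a b c d v := by
  simp only [shiftedForm, Prod.fst_add, Prod.snd_add, Prod.fst_sub, Prod.snd_sub]; ring

def TripleInOrbit (a b c d : ℤ) (u v : ℤ × ℤ) : Prop :=
  ∃ M ∈ apolloA1, M *ᵥ ![a, b, c, d] =
    ![a, shiftedForm a b c d u, shiftedForm a b c d (u + v), shiftedForm a b c d v]

section
variable {a b c d : ℤ}

namespace TripleInOrbit

lemma basis : TripleInOrbit a b c d (1, 0) (0, 1) := by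
  refine ⟨apS3, apS3_mem, ?_⟩
  rw [apS3_mulVec]
  simp [shiftedForm]
  ring

variable {u v : ℤ × ℤ}

lemma neg (h : TripleInOrbit a b c d u v) : TripleInOrbit a b c d (-u) (-v) := by
  rwa [TripleInOrbit, ← neg_add, shiftedForm_neg, shiftedForm_neg, shiftedForm_neg]

lemma neg_right (h : TripleInOrbit a b c d u v) : TripleInOrbit a b c d u (-v) := by
  obtain ⟨M, hM, hMv⟩ := h
  refine ⟨apS3 * M, mul_mem apS3_mem hM, ?_⟩
  have := shiftedForm_parallelogram_law a b c d u v
  rw [← mulVec_mulVec, hMv, apS3_mulVec, shiftedForm_neg, ← sub_eq_add_neg]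
  simp only [vecCons_inj, true_and, and_true]
  linarith

lemma add_two_smul_neg_right (h : TripleInOrbit a b c d u v) :
    TripleInOrbit a b c d (u + 2 • v) (-v) := by
  obtain ⟨M, hM, hMv⟩ := h
  refine ⟨apS2 * M, mul_mem apS2_mem hM, ?_⟩
  have := shiftedForm_parallelogram_law a b c d (u + v) v
  rw [← mulVec_mulVec, hMv, apS2_mulVec, shiftedForm_neg, two_smul, ← add_assoc,
    add_neg_cancel_right]
  simp only [add_sub_cancel_right] at this
  simp only [vecCons_inj, true_and, and_true]
  linarith

lemma neg_left_two_smul_add (h : TripleInOrbit a b c d u v) :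
    TripleInOrbit a b c d (-u) (2 • u + v) := by
  obtain ⟨M, hM, hMv⟩ := h
  refine ⟨apS4 * M, mul_mem apS4_mem hM, ?_⟩
  have := shiftedForm_parallelogram_law a b c d (u + v) u
  rw [← mulVec_mulVec, hMv, apS4_mulVec, shiftedForm_neg, two_smul,
    show -u + (u + u + v) = u + v by abel, show u + u + v = u + v + u by abel]
  simp only [add_sub_cancel_left] at this
  simp only [vecCons_inj, true_and, and_true]
  linarith

lemma neg_left (h : TripleInOrbit a b c d u v) : TripleInOrbit a b c d (-u) v := by
  simpa using h.neg_right.neg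

lemma add_two_smul_left (h : TripleInOrbit a b c d u v) :
    TripleInOrbit a b c d (u + 2 • v) v := by
  simpa using h.add_two_smul_neg_right.neg_right

lemma add_two_smul_right (h : TripleInOrbit a b c d u v) :
    TripleInOrbit a b c d u (v + 2 • u) := by
  simpa [add_comm] using h.neg_left_two_smul_add.neg_left

lemma sub_two_smul_left (h : TripleInOrbit a b c d u v) :
    TripleInOrbit a b c d (u - 2 • v) v := by
  simpa [sub_eq_add_neg] using h.neg_right.add_two_smul_left.neg_right

lemma sub_two_smul_right (h : TripleInOrbit a b c d u v) :
    TripleInOrbit a b c d u (v - 2 • u) := by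
  simpa [sub_eq_add_neg] using h.neg_left.add_two_smul_right.neg_left

lemma add_two_mul_smul_left (h : TripleInOrbit a b c d u v) (k : ℤ) :
    TripleInOrbit a b c d (u + (2 * k) • v) v := by
  induction k using Int.induction_on with
  | zero => simpa using h
  | succ k ih => convert ih.add_two_smul_left using 1; module
  | pred k ih => convert ih.sub_two_smul_left using 1; module

lemma add_two_mul_smul_right (h : TripleInOrbit a b c d u v) (k : ℤ) :
    TripleInOrbit a b c d u (v + (2 * k) • u) := by
  induction k using Int.induction_on with
  | zero => simpa using h
  | succ k ih => convert ih.add_two_smul_right using 1; module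
  | pred k ih => convert ih.sub_two_smul_right using 1; module

lemma of_right_fst_eq_zero (hv : v.1 = 0) (hdet : IsUnit (u.1 * v.2)) (hu : Even u.2) :
    TripleInOrbit a b c d u v := by
  obtain ⟨m, hm⟩ := hu
  have hu₁ := Int.isUnit_iff.1 (isUnit_of_mul_isUnit_left hdet)
  have hv₂ := Int.isUnit_iff.1 (isUnit_of_mul_isUnit_right hdet)
  have base : TripleInOrbit a b c d (u.1, 0) (0, v.2) := by
    rcases hu₁ with h₁ | h₁ <;> rcases hv₂ with h₂ | h₂ <;> rw [h₁, h₂]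
    · exact basis
    · simpa using basis.neg_right
    · simpa using basis.neg_left
    · simpa using basis.neg_left.neg_right
  have hv₂sq : v.2 * v.2 = 1 := Int.isUnit_mul_self (isUnit_of_mul_isUnit_right hdet)
  convert base.add_two_mul_smul_left (m * v.2) using 1
  · ext
    · simp
    · simp only [Prod.snd_add, Prod.smul_snd, smul_eq_mul, hm]
      linear_combination (-2 * m) * hv₂sq
  · ext <;> simp [hv]

theorem of_isUnit_cross (hdet : IsUnit (u.1 * v.2 - u.2 * v.1)) (hu₁ : Odd u.1)
    (hu₂ : Even u.2) (hv₁ : Even v.1) : TripleInOrbit a b c d u v := by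
  induction h : u.1.natAbs + v.1.natAbs using Nat.strong_induction_on generalizing u v with
  | _ n ih =>
    rcases eq_or_ne v.1 0 with hv₀ | hv₀
    · exact of_right_fst_eq_zero hv₀ (by simpa [hv₀] using hdet) hu₂
    have hu₁' := Int.odd_iff.1 hu₁
    have hv₁' := Int.even_iff.1 hv₁
    rcases lt_or_gt_of_ne (show u.1.natAbs ≠ v.1.natAbs by omega) with hlt | hgt
    · obtain ⟨k, hk⟩ := exists_natAbs_add_two_mul_le v.1 (m := u.1) (by omega)
      have := ih (u.1.natAbs + (v.1 + 2 * k * u.1).natAbs) (by omega) (u := u)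
        (v := v + (2 * k) • u) (by convert hdet using 1; simp; ring) hu₁ hu₂
        (by simpa using hv₁.add ((even_two_mul k).mul_right u.1)) (by simp)
      simpa using this.add_two_mul_smul_right (-k)
    · obtain ⟨k, hk⟩ := exists_natAbs_add_two_mul_le u.1 hv₀
      have := ih ((u.1 + 2 * k * v.1).natAbs + v.1.natAbs) (by omega) (u := u + (2 * k) • v)
        (v := v) (by convert hdet using 1; simp; ring)
        (by simpa using hu₁.add_even ((even_two_mul k).mul_right v.1))
        (by simpa using hu₂.add ((even_two_mul k).mul_right v.2)) hv₁ (by simp)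
      simpa using this.add_two_mul_smul_left (-k)

end TripleInOrbit

lemma exists_tripleInOrbit_of_isCoprime {x y : ℤ} (hxy : IsCoprime x y) :
    ∃ u v, TripleInOrbit a b c d u v ∧ ((x, y) = u ∨ (x, y) = u + v ∨ (x, y) = v) := by
  -- `(x, y), (-q, p)` is a basis of `ℤ²`; a multiple of `(x, y)` added to `(-q, p)` fixes parities.
  obtain ⟨p, q, hpq⟩ := hxy
  have hodd : Odd (p * x + q * y) := hpq ▸ odd_one
  have hunit : IsUnit (p * x + q * y) := hpq ▸ isUnit_one
  rcases Int.even_or_odd x with hx | hx <;> rcases Int.even_or_odd y with hy | hy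
  · exact absurd hodd (Int.not_odd_iff_even.2 ((hx.mul_left p).add (hy.mul_left q)))
  · refine ⟨(-q + p * x, p + p * y), (x, y), .of_isUnit_cross ?_ ?_ ?_ hx, by simp⟩
    · convert hunit.neg using 1; ring
    all_goals simp only [← Int.not_even_iff_odd, parity_simps, even_neg] at hx hy hodd ⊢; tauto
  · refine ⟨(x, y), (-q + q * x, p + q * y), .of_isUnit_cross ?_ hx hy ?_, by simp⟩
    · convert hunit using 1; ring
    all_goals simp only [← Int.not_even_iff_odd, parity_simps, even_neg] at hx hy hodd ⊢; tauto
  · refine ⟨(-q + p * x, p + p * y), (x, y) - (-q + p * x, p + p * y),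
      .of_isUnit_cross ?_ ?_ ?_ ?_, by simp⟩
    · convert hunit.neg using 1; simp only [Prod.fst_sub, Prod.snd_sub]; ring
    all_goals
      simp only [Prod.fst_sub, ← Int.not_even_iff_odd, parity_simps, even_neg] at hx hy hodd ⊢
      tauto

end

end Apollonian

theorem shifted_form_values_occur_in_A1_orbit_general
    (a b c d : ℤ)
    (x y : ℤ) (hxy : IsCoprime x y) :
    ∃ M ∈ apolloA1,
      (M.mulVec ![a, b, c, d]) 0 = a ∧
      ∃ i : Fin 4, i ≠ 0 ∧
        (M.mulVec ![a, b, c, d]) i =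
          ((a + b) * x ^ 2 + (a + b + d - c) * x * y + (a + d) * y ^ 2) - a := by
  obtain ⟨u, v, ⟨M, hM, hMv⟩, hxy⟩ :=
    Apollonian.exists_tripleInOrbit_of_isCoprime (a := a) (b := b) (c := c) (d := d) hxy
  refine ⟨M, hM, by simp [hMv], ?_⟩
  change ∃ i : Fin 4, i ≠ 0 ∧ (M *ᵥ ![a, b, c, d]) i = Apollonian.shiftedForm a b c d (x, y)
  rcases hxy with h | h | h <;> rw [h, hMv]
  · exact ⟨1, by decide, rfl⟩
  · exact ⟨2, by decide, rfl⟩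
  · exact ⟨3, by decide, rfl⟩

/-- Every integer of the form `f_a(x,y) - a` with `gcd(x,y) = 1`, where
`f_a(x,y) = (a+b)x² + (a+b+d-c)xy + (a+d)y²`, occurs as a coordinate of some
vector in the orbit `A₁·(a,b,c,d)ᵀ`, whose first coordinate is `a`. -/
theorem shifted_form_values_occur_in_A1_orbit
    (a b c d : ℤ) (hQ : descartesQ a b c d = 0)
    (x y : ℤ) (hxy : IsCoprime x y) :
    ∃ M ∈ apolloA1,
      (M.mulVec ![a, b, c, d]) 0 = a ∧
      ∃ i : Fin 4, i ≠ 0 ∧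
        (M.mulVec ![a, b, c, d]) i =
          ((a + b) * x ^ 2 + (a + b + d - c) * x * y + (a + d) * y ^ 2) - a :=
  shifted_form_values_occur_in_A1_orbit_general a b c d x y hxy
end

section
/- Let a, b, c, d be integers satisfying 2(a²+b²+c²+d²) = (a+b+c+d)². Then a+b+c+d is even, a+b+d−c is even, and (a+b+d−c)² − 4(a+b)(a+d) = −4a². In particular, for any Descartes quadruple (a,b,c,d), the integer binary quadratic form f_a(x,y) = (a+b)x² + (a+b+d−c)xy + (a+d)y² has discriminant −4a². -/
/-- For any Descartes quadruple `(a,b,c,d)` (with `2(a²+b²+c²+d²) = (a+b+c+d)²`),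
the quantities `a+b+c+d` and `a+b+d-c` are even, and the binary quadratic form
`f_a(x,y) = (a+b)x² + (a+b+d-c)xy + (a+d)y²` has discriminant `-4a²`. -/
theorem descartes_quadruple_parity_and_discriminant
    (a b c d : ℤ)
    (hQ : 2 * (a ^ 2 + b ^ 2 + c ^ 2 + d ^ 2) = (a + b + c + d) ^ 2) :
    2 ∣ (a + b + c + d) ∧ 2 ∣ (a + b + d - c) ∧
      (a + b + d - c) ^ 2 - 4 * (a + b) * (a + d) = -4 * a ^ 2 := by
  have hsq : (2:ℤ) ∣ (a + b + c + d) ^ 2 := ⟨_, hQ.symm⟩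
  have h1 : (2:ℤ) ∣ (a + b + c + d) := Int.Prime.dvd_pow' Nat.prime_two hsq
  refine ⟨h1, ?_, by linear_combination hQ⟩
  obtain ⟨k, hk⟩ := h1
  exact ⟨k - c, by linarith⟩
end

section
/- There exists an absolute constant C > 0 such that the following holds. Let a ≠ a' be positive integers, let (a,b,c,d) and (a',b',c',d') be integer quadruples with Q(a,b,c,d) = Q(a',b',c',d') = 0, gcd(a,b,c,d) = gcd(a',b',c',d') = 1, a + b > 0 and a' + b' > 0, and let F(x,y,x',y') = f_a(x,y) − f_{a'}(x',y') be the quaternary quadratic form obtained from the associated binary forms. Then for every finite set S of primes, ∏_{p ∈ S} ( p^{−3} · #{ v ∈ (ℤ/pℤ)⁴ : F(v) ≡ a − a' (mod p) } ) ≤ C · 2^{ω(gcd(a,a'))} · ∏_{p prime, p | a·a'·(a−a'), p ∤ gcd(a,a')} (1 + 1/p), where ω(n) denotes the number of distinct prime divisors of n. (This is the bound on the singular series 𝔖(a−a') of F.) -/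
open Finset

section Counting

variable {α β R : Type*} [Fintype α] [Fintype β] [DecidableEq R]

lemma card_filter_prod_eq_sum (P : α → β → Prop) [∀ a b, Decidable (P a b)] :
    #{w : α × β | P w.1 w.2} = ∑ b, #{a | P a b} := by
  simp only [card_filter]
  rw [Fintype.sum_prod_type, Finset.sum_comm]

lemma card_filter_sub_eq_sum_mul [AddCommGroup R] [Fintype R] (f : α → R) (g : β → R) (t : R) :
    #{w : α × β | f w.1 - g w.2 = t} = ∑ u, #{a | f a = u} * #{b | g b = u - t} := by
  calc #{w : α × β | f w.1 - g w.2 = t}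
      = ∑ a, #{b | g b = f a - t} := by
        simp only [card_filter, Fintype.sum_prod_type, eq_sub_iff_add_eq,
          add_comm t, eq_comm]
    _ = ∑ u, ∑ a with f a = u, #{b | g b = u - t} := by
        rw [← Finset.sum_fiberwise univ f]
        refine sum_congr rfl fun u _ ↦ sum_congr rfl fun a ha ↦ ?_
        rw [(mem_filter.1 ha).2]
    _ = _ := by simp only [sum_const, smul_eq_mul]

end Counting

lemma sum_mul_sub_comm {G M : Type*} [AddCommGroup G] [Fintype G] [CommSemiring M]
    (A B : G → M) (t : G) :
    ∑ u, A u * B (u - t) = ∑ u, B u * A (u - -t) :=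
  (Fintype.sum_equiv (Equiv.addRight t) _ _ fun u ↦ by simp [mul_comm]).symm

lemma card_filter_quadratic_le_two {F : Type*} [Field F] [Fintype F] [DecidableEq F] {a : F}
    (ha : a ≠ 0) (b c : F) :
    #{x | a * x ^ 2 + b * x + c = 0} ≤ 2 := by
  open Polynomial in
  set P : F[X] := C a * X ^ 2 + C b * X + C c
  have hdeg : P.natDegree = 2 := natDegree_quadratic ha
  have hP : P ≠ 0 := ne_zero_of_natDegree_gt (n := 0) (by omega)
  calc #{x | a * x ^ 2 + b * x + c = 0}
      ≤ P.roots.toFinset.card := card_le_card fun x hx ↦ by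
        simpa [P, mem_roots hP] using hx
    _ ≤ 2 := (Multiset.toFinset_card_le _).trans (hdeg ▸ card_roots' P)

section QuadraticChar

variable {F : Type*} [Field F] [Fintype F] [DecidableEq F]

lemma card_filter_sq_eq (hF : ringChar F ≠ 2) (a : F) :
    (#{x : F | x ^ 2 = a} : ℤ) = quadraticChar F a + 1 := by
  rw [← quadraticChar_card_sqrts hF a, Set.toFinset_ofPred]

lemma sum_quadraticChar_mul_sub (hF : ringChar F ≠ 2) (u : F) :
    ∑ s, quadraticChar F s * quadraticChar F (s - u) =
      if u = 0 then (Fintype.card F : ℤ) - 1 else -1 := by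
  split_ifs with hu
  · subst hu
    have hsq : quadraticChar F * quadraticChar F = 1 := by
      rw [← sq, (quadraticChar_isQuadratic F).sq_eq_one]
    simp_rw [sub_zero, ← MulChar.mul_apply, hsq, MulChar.sum_one_eq_card_units, Fintype.card_units]
    rw [Nat.cast_sub Fintype.card_pos, Nat.cast_one]
  · have hχ := jacobiSum_nontrivial_inv (quadraticChar_ne_one hF)
    rw [(quadraticChar_isQuadratic F).inv, jacobiSum] at hχ
    have h1 : quadraticChar F (-1) * quadraticChar F (-1) = 1 := by
      rw [← map_mul, neg_one_mul, neg_neg, map_one]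
    calc ∑ s, quadraticChar F s * quadraticChar F (s - u)
        = ∑ x, quadraticChar F (u * x) * quadraticChar F (u * x - u) :=
          (Fintype.sum_equiv (Equiv.mulLeft₀ u hu) _ _ fun _ ↦ rfl).symm
      _ = ∑ x, quadraticChar F (-1) * (quadraticChar F x * quadraticChar F (1 - x)) := by
          refine sum_congr rfl fun x _ ↦ ?_
          rw [← map_mul, ← map_mul, ← map_mul,
            show u * x * (u * x - u) = u ^ 2 * (-1 * (x * (1 - x))) by ring, map_mul,
            quadraticChar_sq_one' hu, one_mul]
      _ = -1 := by rw [← mul_sum, hχ, mul_neg, h1]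

lemma card_filter_mul_sq_eq (hF : ringChar F ≠ 2) {D : F} (hD : D ≠ 0) (v : F) :
    (#{y : F | D * y ^ 2 = v} : ℤ) = quadraticChar F D * quadraticChar F v + 1 := by
  have hfilter : #{y : F | D * y ^ 2 = v} = #{y : F | y ^ 2 = v / D} := by
    congr 1; ext y
    simp only [mem_filter_univ, eq_div_iff hD, mul_comm D]
  rw [hfilter, card_filter_sq_eq hF, show v / D = D * v * (D⁻¹) ^ 2 by field_simp, map_mul, map_mul,
    quadraticChar_sq_one' (inv_ne_zero hD), mul_one]

lemma card_filter_sq_sub_mul_sq_eq (hF : ringChar F ≠ 2) {D : F} (hD : D ≠ 0) (u : F) :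
    (#{w : F × F | w.1 ^ 2 - D * w.2 ^ 2 = u} : ℤ) =
      Fintype.card F - quadraticChar F D +
        if u = 0 then Fintype.card F * quadraticChar F D else 0 := by
  have hshift : ∑ s, quadraticChar F (s - u) = 0 := by
    rw [Fintype.sum_equiv (Equiv.subRight u) (fun s ↦ quadraticChar F (s - u)) (quadraticChar F)
      fun _ ↦ rfl, quadraticChar_sum_zero hF]
  calc (#{w : F × F | w.1 ^ 2 - D * w.2 ^ 2 = u} : ℤ)
      = ∑ s, (#{x : F | x ^ 2 = s} : ℤ) * #{y | D * y ^ 2 = s - u} := by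
        have := card_filter_sub_eq_sum_mul (fun x : F ↦ x ^ 2) (fun y : F ↦ D * y ^ 2) u
        exact_mod_cast this
    _ = ∑ s, (quadraticChar F D * (quadraticChar F s * quadraticChar F (s - u)) +
          quadraticChar F s + quadraticChar F D * quadraticChar F (s - u) + 1) := by
        refine sum_congr rfl fun s _ ↦ ?_
        rw [card_filter_sq_eq hF, card_filter_mul_sq_eq hF hD]
        ring
    _ = _ := by
        rw [sum_add_distrib, sum_add_distrib, sum_add_distrib, ← mul_sum, ← mul_sum,
          sum_quadraticChar_mul_sub hF, hshift, quadraticChar_sum_zero hF]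
        split_ifs <;> simp <;> ring

end QuadraticChar

section BinaryForm

variable {F : Type*} [Field F] [Fintype F] [DecidableEq F]

def binaryForm (α β γ : F) (w : F × F) : F :=
  α * w.1 ^ 2 + β * w.1 * w.2 + γ * w.2 ^ 2

def repCount (α β γ u : F) : ℕ :=
  #{w | binaryForm α β γ w = u}

lemma sum_repCount (α β γ : F) : ∑ u, repCount α β γ u = Fintype.card F ^ 2 := by
  simp only [repCount, ← card_eq_sum_card_fiberwise (fun w _ ↦ mem_univ (binaryForm α β γ w)),
    card_univ, Fintype.card_prod, sq]

lemma sum_repCount_sub (α β γ t : F) :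
    ∑ u, repCount α β γ (u - t) = Fintype.card F ^ 2 := by
  rw [Fintype.sum_equiv (Equiv.subRight t) (fun u ↦ repCount α β γ (u - t)) (repCount α β γ)
    fun _ ↦ rfl, sum_repCount]

lemma natCard_binaryForm_sub_eq_sum (α β γ α' β' γ' t : F) :
    Nat.card {v : F × F × F × F //
        binaryForm α β γ (v.1, v.2.1) - binaryForm α' β' γ' (v.2.2.1, v.2.2.2) = t} =
      ∑ u, repCount α β γ u * repCount α' β' γ' (u - t) := by
  rw [Nat.card_eq_fintype_card, Fintype.card_subtype]
  refine (card_equiv (Equiv.prodAssoc F F (F × F)).symm fun v ↦ ?_).trans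
    (card_filter_sub_eq_sum_mul (binaryForm α β γ) (binaryForm α' β' γ') t)
  simp only [mem_filter_univ, Equiv.prodAssoc_symm_apply]

variable {α β γ : F}

lemma repCount_shear (s u : F) :
    repCount (α + β * s + γ * s ^ 2) (β + 2 * γ * s) γ u = repCount α β γ u :=
  card_equiv ((Equiv.refl F).prodShear fun x ↦ Equiv.addRight (s * x)) fun w ↦ by
    simp only [mem_filter_univ, Equiv.prodShear_apply, Equiv.refl_apply, Equiv.coe_addRight]
    unfold binaryForm
    ring_nf

lemma exists_shear_ne_zero (hF : ringChar F ≠ 2) (h : ¬(α = 0 ∧ β = 0 ∧ γ = 0)) :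
    ∃ s : F, α + β * s + γ * s ^ 2 ≠ 0 := by
  by_contra! hs
  have h0 := hs 0
  have h1 := hs 1
  have h2 := hs (-1)
  have hα : α = 0 := by linear_combination h0
  have hγ : γ = 0 := by
    have : 2 * γ = 0 := by linear_combination h1 + h2 - 2 * h0
    exact (mul_eq_zero.1 this).resolve_left (Ring.two_ne_zero hF)
  exact h ⟨hα, by linear_combination h1 - h0 - hγ, hγ⟩

lemma repCount_le_of_leading_ne_zero (hα : α ≠ 0) (u : F) :
    repCount α β γ u ≤ 2 * Fintype.card F := by
  calc repCount α β γ u = ∑ y, #{x | α * x ^ 2 + β * x * y + γ * y ^ 2 = u} :=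
        card_filter_prod_eq_sum fun x y ↦ α * x ^ 2 + β * x * y + γ * y ^ 2 = u
    _ ≤ ∑ _y : F, 2 := sum_le_sum fun y _ ↦
        (card_le_card fun x hx ↦ by rw [mem_filter_univ] at hx ⊢; linear_combination hx).trans
          (card_filter_quadratic_le_two hα (β * y) (γ * y ^ 2 - u))
    _ = 2 * Fintype.card F := by simp [mul_comm]

lemma repCount_le (hF : ringChar F ≠ 2) (h : ¬(α = 0 ∧ β = 0 ∧ γ = 0)) (u : F) :
    repCount α β γ u ≤ 2 * Fintype.card F := by
  obtain ⟨s, hs⟩ := exists_shear_ne_zero hF h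
  exact repCount_shear (β := β) s u ▸ repCount_le_of_leading_ne_zero hs u

lemma repCount_eq_of_leading_ne_zero (hF : ringChar F ≠ 2) (hα : α ≠ 0)
    (hΔ : β ^ 2 - 4 * (α * γ) ≠ 0) (u : F) :
    (repCount α β γ u : ℤ) = Fintype.card F - quadraticChar F (β ^ 2 - 4 * (α * γ)) +
      if u = 0 then Fintype.card F * quadraticChar F (β ^ 2 - 4 * (α * γ)) else 0 := by
  have h2α : 2 * α ≠ 0 := mul_ne_zero (Ring.two_ne_zero hF) hα
  have h4α : 4 * α ≠ 0 := by
    have := mul_ne_zero (Ring.two_ne_zero hF) h2α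
    rwa [← mul_assoc, show (2 : F) * 2 = 4 by norm_num] at this
  have hcomplete : repCount α β γ u =
      #{w : F × F | w.1 ^ 2 - (β ^ 2 - 4 * (α * γ)) * w.2 ^ 2 = 4 * α * u} := by
    rw [card_filter_prod_eq_sum (fun X y ↦ X ^ 2 - (β ^ 2 - 4 * (α * γ)) * y ^ 2 = 4 * α * u)]
    refine (card_filter_prod_eq_sum fun x y ↦ α * x ^ 2 + β * x * y + γ * y ^ 2 = u).trans
      (sum_congr rfl fun y _ ↦ card_equiv ((Equiv.mulLeft₀ _ h2α).trans (Equiv.addRight (β * y)))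
        fun x ↦ ?_)
    simp only [mem_filter_univ, Equiv.trans_apply, Equiv.mulLeft₀_apply, Equiv.coe_addRight]
    rw [show (2 * α * x + β * y) ^ 2 - (β ^ 2 - 4 * (α * γ)) * y ^ 2 =
      4 * α * (α * x ^ 2 + β * x * y + γ * y ^ 2) by ring, mul_right_inj' h4α]
  have hu : 4 * α * u = 0 ↔ u = 0 := by simp [h4α]
  rw [hcomplete, card_filter_sq_sub_mul_sq_eq hF hΔ, if_congr hu rfl rfl]

lemma repCount_eq (hF : ringChar F ≠ 2) (hΔ : β ^ 2 - 4 * (α * γ) ≠ 0) (u : F) :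
    (repCount α β γ u : ℤ) = Fintype.card F - quadraticChar F (β ^ 2 - 4 * (α * γ)) +
      if u = 0 then Fintype.card F * quadraticChar F (β ^ 2 - 4 * (α * γ)) else 0 := by
  obtain ⟨s, hs⟩ := exists_shear_ne_zero hF (α := α) (β := β) (γ := γ)
    fun ⟨hα, hβ, hγ⟩ ↦ hΔ (by simp [hα, hβ, hγ])
  have hshear : (β + 2 * γ * s) ^ 2 - 4 * ((α + β * s + γ * s ^ 2) * γ) = β ^ 2 - 4 * (α * γ) := by
    ring
  rw [← repCount_shear s u, repCount_eq_of_leading_ne_zero hF hs (hshear ▸ hΔ), hshear]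

lemma sum_repCount_mul_repCount_sub_eq (hF : ringChar F ≠ 2) (hΔ : β ^ 2 - 4 * (α * γ) ≠ 0)
    (α' β' γ' t : F) :
    ∑ u, (repCount α β γ u : ℤ) * repCount α' β' γ' (u - t) =
      (Fintype.card F - quadraticChar F (β ^ 2 - 4 * (α * γ))) * Fintype.card F ^ 2 +
        Fintype.card F * quadraticChar F (β ^ 2 - 4 * (α * γ)) * repCount α' β' γ' (-t) := by
  have hsum : ∑ u, (repCount α' β' γ' (u - t) : ℤ) = Fintype.card F ^ 2 := by
    exact_mod_cast sum_repCount_sub α' β' γ' t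
  simp only [repCount_eq hF hΔ, add_mul, ite_mul, zero_mul, sum_add_distrib, ← mul_sum, hsum,
    sum_ite_eq', mem_univ, if_true, zero_sub]

lemma sum_repCount_mul_le (hF : ringChar F ≠ 2) {α' β' γ' : F}
    (h' : ¬(α' = 0 ∧ β' = 0 ∧ γ' = 0)) (t : F) :
    ∑ u, repCount α β γ u * repCount α' β' γ' (u - t) ≤ 2 * Fintype.card F ^ 3 :=
  calc ∑ u, repCount α β γ u * repCount α' β' γ' (u - t)
      ≤ ∑ u, repCount α β γ u * (2 * Fintype.card F) :=
        sum_le_sum fun u _ ↦ Nat.mul_le_mul_left _ (repCount_le hF h' _)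
    _ = 2 * Fintype.card F ^ 3 := by rw [← sum_mul, sum_repCount]; ring

lemma sum_repCount_mul_le_of_discr_ne_zero (hF : ringChar F ≠ 2) {α' β' γ' : F}
    (hΔ : β ^ 2 - 4 * (α * γ) ≠ 0) (h' : ¬(α' = 0 ∧ β' = 0 ∧ γ' = 0)) (t : F) :
    ∑ u, repCount α β γ u * repCount α' β' γ' (u - t) ≤
      Fintype.card F ^ 3 + Fintype.card F ^ 2 := by
  zify
  rw [sum_repCount_mul_repCount_sub_eq hF hΔ]
  have hr : (repCount α' β' γ' (-t) : ℤ) ≤ 2 * Fintype.card F :=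
    mod_cast repCount_le hF h' _
  have hq : (0 : ℤ) ≤ Fintype.card F := by positivity
  rcases quadraticChar_dichotomy hΔ with he | he <;> rw [he] <;> nlinarith

lemma sum_repCount_mul_le_of_quadraticChar_eq (hF : ringChar F ≠ 2) {α' β' γ' : F}
    (hΔ : β ^ 2 - 4 * (α * γ) ≠ 0) (hΔ' : β' ^ 2 - 4 * (α' * γ') ≠ 0)
    (hχ : quadraticChar F (β ^ 2 - 4 * (α * γ)) = quadraticChar F (β' ^ 2 - 4 * (α' * γ')))
    {t : F} (ht : t ≠ 0) :
    ∑ u, repCount α β γ u * repCount α' β' γ' (u - t) ≤ Fintype.card F ^ 3 := by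
  zify
  rw [sum_repCount_mul_repCount_sub_eq hF hΔ, repCount_eq hF hΔ', if_neg (neg_ne_zero.2 ht),
    ← hχ]
  have hq : (0 : ℤ) ≤ Fintype.card F := by positivity
  rcases quadraticChar_dichotomy hΔ with he | he <;> rw [he] <;> nlinarith

end BinaryForm

lemma ZMod.ringChar_ne_two {p : ℕ} (hp2 : p ≠ 2) : ringChar (ZMod p) ≠ 2 := by
  rwa [ZMod.ringChar_zmod_n]

noncomputable def descartesLocalCount (p : ℕ) (a b c d a' b' c' d' : ℤ) : ℕ :=
  Nat.card {v : ZMod p × ZMod p × ZMod p × ZMod p //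
    ((a + b : ℤ) : ZMod p) * v.1 ^ 2 +
      ((a + b + d - c : ℤ) : ZMod p) * v.1 * v.2.1 +
      ((a + d : ℤ) : ZMod p) * v.2.1 ^ 2 -
    (((a' + b' : ℤ) : ZMod p) * v.2.2.1 ^ 2 +
      ((a' + b' + d' - c' : ℤ) : ZMod p) * v.2.2.1 * v.2.2.2 +
      ((a' + d' : ℤ) : ZMod p) * v.2.2.2 ^ 2) =
    ((a - a' : ℤ) : ZMod p)}

lemma descartesLocalCount_eq_sum (p : ℕ) [Fact p.Prime] (a b c d a' b' c' d' : ℤ) :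
    descartesLocalCount p a b c d a' b' c' d' =
      ∑ u, repCount ((a + b : ℤ) : ZMod p) ((a + b + d - c : ℤ) : ZMod p) ((a + d : ℤ) : ZMod p) u *
        repCount ((a' + b' : ℤ) : ZMod p) ((a' + b' + d' - c' : ℤ) : ZMod p)
          ((a' + d' : ℤ) : ZMod p) (u - ((a - a' : ℤ) : ZMod p)) :=
  natCard_binaryForm_sub_eq_sum ..

section Descartes

variable {a b c d a' b' c' d' : ℤ}

lemma descartes_discr_eq (R : Type*) [CommRing R] (hQ : descartesQ a b c d = 0) :
    ((a + b + d - c : ℤ) : R) ^ 2 - 4 * (((a + b : ℤ) : R) * ((a + d : ℤ) : R)) =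
      -4 * (a : R) ^ 2 := by
  have hR := congrArg (Int.cast : ℤ → R) hQ
  push_cast [descartesQ] at hR ⊢
  linear_combination hR

variable {p : ℕ} [Fact p.Prime]

lemma descartes_discr_ne_zero (hp2 : p ≠ 2) (hQ : descartesQ a b c d = 0)
    (ha : ¬(p : ℤ) ∣ a) :
    ((a + b + d - c : ℤ) : ZMod p) ^ 2 -
      4 * (((a + b : ℤ) : ZMod p) * ((a + d : ℤ) : ZMod p)) ≠ 0 := by
  have h2 : (2 : ZMod p) ≠ 0 := Ring.two_ne_zero (ZMod.ringChar_ne_two hp2)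
  rw [descartes_discr_eq _ hQ, show (-4 : ZMod p) = -(2 * 2) by norm_num]
  rw [← ZMod.intCast_zmod_eq_zero_iff_dvd] at ha
  exact mul_ne_zero (neg_ne_zero.2 (mul_ne_zero h2 h2)) (pow_ne_zero 2 ha)

lemma quadraticChar_descartes_discr_eq (hp2 : p ≠ 2)
    (hQ : descartesQ a b c d = 0) (ha : ¬(p : ℤ) ∣ a) :
    quadraticChar (ZMod p) (((a + b + d - c : ℤ) : ZMod p) ^ 2 -
      4 * (((a + b : ℤ) : ZMod p) * ((a + d : ℤ) : ZMod p))) = quadraticChar (ZMod p) (-1) := by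
  rw [← ZMod.intCast_zmod_eq_zero_iff_dvd] at ha
  rw [descartes_discr_eq _ hQ, show (-4 : ZMod p) * (a : ZMod p) ^ 2 = -1 * (2 * a) ^ 2 by ring,
    map_mul, quadraticChar_sq_one' (mul_ne_zero (Ring.two_ne_zero (ZMod.ringChar_ne_two hp2)) ha),
    mul_one]

lemma descartes_coeffs_ne_zero (hp2 : p ≠ 2)
    (hQ : descartesQ a b c d = 0) (hg : Nat.gcd (Int.gcd a b) (Int.gcd c d) = 1) :
    ¬(((a + b : ℤ) : ZMod p) = 0 ∧ ((a + b + d - c : ℤ) : ZMod p) = 0 ∧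
      ((a + d : ℤ) : ZMod p) = 0) := by
  rintro ⟨hab, habdc, had⟩
  have hpa : (p : ℤ) ∣ a := by
    by_contra ha
    apply descartes_discr_ne_zero hp2 hQ ha
    rw [hab, habdc, had]; ring
  rw [← ZMod.intCast_zmod_eq_zero_iff_dvd] at hpa
  push_cast at hab habdc had
  have hb : (b : ZMod p) = 0 := by linear_combination hab - hpa
  have hd : (d : ZMod p) = 0 := by linear_combination had - hpa
  have hc : (c : ZMod p) = 0 := by linear_combination hab + had - habdc - hpa
  simp only [ZMod.intCast_zmod_eq_zero_iff_dvd] at hpa hb hc hd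
  have := Nat.dvd_gcd (Int.natCast_dvd_natCast.1 (Int.dvd_coe_gcd hpa hb))
    (Int.natCast_dvd_natCast.1 (Int.dvd_coe_gcd hc hd))
  exact Nat.Prime.not_dvd_one Fact.out (hg ▸ this)

lemma descartesLocalCount_le_two_mul (hQ' : descartesQ a' b' c' d' = 0)
    (hg' : Nat.gcd (Int.gcd a' b') (Int.gcd c' d') = 1) :
    descartesLocalCount p a b c d a' b' c' d' ≤ 2 * p ^ 3 := by
  rcases eq_or_ne p 2 with rfl | hp2
  · calc descartesLocalCount 2 a b c d a' b' c' d'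
        ≤ Nat.card (ZMod 2 × ZMod 2 × ZMod 2 × ZMod 2) := Finite.card_subtype_le _
      _ = 2 * 2 ^ 3 := by simp
  rw [descartesLocalCount_eq_sum]
  simpa only [ZMod.card] using
    sum_repCount_mul_le (ZMod.ringChar_ne_two hp2) (descartes_coeffs_ne_zero hp2 hQ' hg') _

lemma descartesLocalCount_le_of_not_dvd_gcd (hp2 : p ≠ 2) (hQ : descartesQ a b c d = 0)
    (hQ' : descartesQ a' b' c' d' = 0) (hg : Nat.gcd (Int.gcd a b) (Int.gcd c d) = 1)
    (hg' : Nat.gcd (Int.gcd a' b') (Int.gcd c' d') = 1) (hpG : ¬p ∣ Int.gcd a a') :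
    descartesLocalCount p a b c d a' b' c' d' ≤ p ^ 3 + p ^ 2 := by
  have hF : ringChar (ZMod p) ≠ 2 := ZMod.ringChar_ne_two hp2
  rw [descartesLocalCount_eq_sum]
  rcases not_and_or.1 fun h ↦ hpG (Int.natCast_dvd_natCast.1 (Int.dvd_coe_gcd h.1 h.2))
    with ha | ha'
  · simpa only [ZMod.card] using sum_repCount_mul_le_of_discr_ne_zero hF
      (descartes_discr_ne_zero hp2 hQ ha) (descartes_coeffs_ne_zero hp2 hQ' hg') _
  · rw [sum_mul_sub_comm]
    simpa only [ZMod.card] using sum_repCount_mul_le_of_discr_ne_zero hF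
      (descartes_discr_ne_zero hp2 hQ' ha') (descartes_coeffs_ne_zero hp2 hQ hg) _

lemma descartesLocalCount_le_of_not_dvd_natAbs (hp2 : p ≠ 2) (hQ : descartesQ a b c d = 0)
    (hQ' : descartesQ a' b' c' d' = 0) (h : ¬p ∣ (a * a' * (a - a')).natAbs) :
    descartesLocalCount p a b c d a' b' c' d' ≤ p ^ 3 := by
  have hF : ringChar (ZMod p) ≠ 2 := ZMod.ringChar_ne_two hp2
  simp only [← Int.natCast_dvd, Prime.dvd_mul (Nat.prime_iff_prime_int.1 Fact.out), not_or] at h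
  obtain ⟨⟨ha, ha'⟩, haa'⟩ := h
  rw [descartesLocalCount_eq_sum]
  simpa only [ZMod.card] using sum_repCount_mul_le_of_quadraticChar_eq hF
    (descartes_discr_ne_zero hp2 hQ ha) (descartes_discr_ne_zero hp2 hQ' ha')
    (by rw [quadraticChar_descartes_discr_eq hp2 hQ ha,
      quadraticChar_descartes_discr_eq hp2 hQ' ha'])
    (by rwa [Ne, ZMod.intCast_zmod_eq_zero_iff_dvd])

end Descartes

section EulerProduct

lemma inv_pow_three_mul_le {p G M N : ℕ} (hp : p.Prime) (hM : M ≠ 0) (h2 : N ≤ 2 * p ^ 3)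
    (h1 : p ≠ 2 → ¬p ∣ G → N ≤ p ^ 3 + p ^ 2) (h0 : p ≠ 2 → ¬p ∣ G → ¬p ∣ M → N ≤ p ^ 3) :
    ((p : ℝ) ^ 3)⁻¹ * N ≤ (if p = 2 ∨ p ∣ G then 2 else 1) *
      if p ∈ M.primeFactors.filter (¬· ∣ G) then 1 + 1 / (p : ℝ) else 1 := by
  have hp0 : (0 : ℝ) < p := mod_cast hp.pos
  have hp3 : (0 : ℝ) < (p : ℝ) ^ 3 := by positivity
  rw [inv_mul_le_iff₀ hp3]
  have hone : (1 : ℝ) ≤ if p ∈ M.primeFactors.filter (¬· ∣ G) then 1 + 1 / (p : ℝ) else 1 := by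
    split_ifs <;> simp
  by_cases hbad : p = 2 ∨ p ∣ G
  · rw [if_pos hbad]
    calc (N : ℝ) ≤ p ^ 3 * 2 := by rw [mul_comm]; exact_mod_cast h2
      _ ≤ _ := by gcongr; linarith
  rw [if_neg hbad, one_mul]
  obtain ⟨hp2, hpG⟩ := not_or.1 hbad
  split_ifs with hT
  · calc (N : ℝ) ≤ p ^ 3 + p ^ 2 := by exact_mod_cast h1 hp2 hpG
      _ = p ^ 3 * (1 + 1 / p) := by field_simp
  · have hpM : ¬p ∣ M := fun hpM ↦ hT (mem_filter.2 ⟨Nat.mem_primeFactors.2 ⟨hp, hpM, hM⟩, hpG⟩)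
    rw [mul_one]
    exact_mod_cast h0 hp2 hpG hpM

lemma prod_inv_pow_three_mul_le {S : Finset ℕ} (hS : ∀ p ∈ S, p.Prime) {G M : ℕ} (hG : G ≠ 0)
    (hM : M ≠ 0) (N : ℕ → ℕ) (h2 : ∀ p ∈ S, N p ≤ 2 * p ^ 3)
    (h1 : ∀ p ∈ S, p ≠ 2 → ¬p ∣ G → N p ≤ p ^ 3 + p ^ 2)
    (h0 : ∀ p ∈ S, p ≠ 2 → ¬p ∣ G → ¬p ∣ M → N p ≤ p ^ 3) :
    ∏ p ∈ S, ((p : ℝ) ^ 3)⁻¹ * N p ≤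
      2 * 2 ^ G.primeFactors.card * ∏ p ∈ M.primeFactors.filter (¬· ∣ G), (1 + 1 / (p : ℝ)) := by
  set T := M.primeFactors.filter (¬· ∣ G)
  have hbad : #{p ∈ S | p = 2 ∨ p ∣ G} ≤ G.primeFactors.card + 1 := by
    refine (card_le_card fun p hp ↦ ?_).trans (card_insert_le 2 G.primeFactors)
    obtain ⟨hpS, h2 | hpG⟩ := mem_filter.1 hp
    · exact mem_insert.2 (Or.inl h2)
    · exact mem_insert_of_mem (Nat.mem_primeFactors.2 ⟨hS p hpS, hpG, hG⟩)
  calc ∏ p ∈ S, ((p : ℝ) ^ 3)⁻¹ * N p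
      ≤ ∏ p ∈ S, ((if p = 2 ∨ p ∣ G then 2 else 1) * if p ∈ T then 1 + 1 / (p : ℝ) else 1) :=
        prod_le_prod (fun p _ ↦ by positivity) fun p hp ↦
          inv_pow_three_mul_le (hS p hp) hM (h2 p hp) (h1 p hp) (h0 p hp)
    _ = 2 ^ #{p ∈ S | p = 2 ∨ p ∣ G} * ∏ p ∈ S ∩ T, (1 + 1 / (p : ℝ)) := by
        rw [prod_mul_distrib, prod_ite, prod_const, prod_const_one, mul_one, prod_ite_mem]
    _ ≤ 2 * 2 ^ G.primeFactors.card * ∏ p ∈ T, (1 + 1 / (p : ℝ)) := by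
        rw [← pow_succ']
        gcongr with p
        · exact one_le_two
        · simp
        · exact inter_subset_right

end EulerProduct

/-- Bound on the singular series of `F = f_a - f_{a'}` at the value `a - a'`:
every finite product of local densities
`p⁻³·#{v ∈ (ℤ/p)⁴ : F(v) ≡ a - a' (p)}` is at most
`C·2^{ω((a,a'))}·∏_{p | aa'(a-a'), p ∤ (a,a')} (1 + 1/p)`. -/
theorem singular_series_upper_bound :
    ∃ C : ℝ, 0 < C ∧
    ∀ a a' : ℤ, 0 < a → 0 < a' → a ≠ a' →
    ∀ b c d b' c' d' : ℤ,
      descartesQ a b c d = 0 → descartesQ a' b' c' d' = 0 →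
      Nat.gcd (Int.gcd a b) (Int.gcd c d) = 1 →
      Nat.gcd (Int.gcd a' b') (Int.gcd c' d') = 1 →
      0 < a + b → 0 < a' + b' →
    ∀ S : Finset ℕ, (∀ p ∈ S, p.Prime) →
      (∏ p ∈ S, (((p : ℝ) ^ 3)⁻¹ *
        (Nat.card {v : ZMod p × ZMod p × ZMod p × ZMod p //
          ((a + b : ℤ) : ZMod p) * v.1 ^ 2 +
            ((a + b + d - c : ℤ) : ZMod p) * v.1 * v.2.1 +
            ((a + d : ℤ) : ZMod p) * v.2.1 ^ 2 -
          (((a' + b' : ℤ) : ZMod p) * v.2.2.1 ^ 2 +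
            ((a' + b' + d' - c' : ℤ) : ZMod p) * v.2.2.1 * v.2.2.2 +
            ((a' + d' : ℤ) : ZMod p) * v.2.2.2 ^ 2) =
          ((a - a' : ℤ) : ZMod p)} : ℝ))) ≤
      C * 2 ^ ((Int.gcd a a').primeFactors.card) *
        ∏ p ∈ (a * a' * (a - a')).natAbs.primeFactors.filter
            (fun p => ¬ p ∣ Int.gcd a a'),
          (1 + 1 / (p : ℝ)) := by
  refine ⟨2, two_pos, fun a a' ha ha' hne b c d b' c' d' hQ hQ' hg hg' _ _ S hS ↦ ?_⟩
  have hG : Int.gcd a a' ≠ 0 := (Int.gcd_pos_of_ne_zero_left a' ha.ne').ne'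
  have hM : (a * a' * (a - a')).natAbs ≠ 0 := by
    simp [ha.ne', ha'.ne', sub_ne_zero.2 hne]
  refine prod_inv_pow_three_mul_le hS hG hM (fun p ↦ descartesLocalCount p a b c d a' b' c' d')
    (fun p hp ↦ ?_) (fun p hp hp2 hpG ↦ ?_) (fun p hp hp2 _ hpM ↦ ?_) <;> have := Fact.mk (hS p hp)
  · exact descartesLocalCount_le_two_mul hQ' hg'
  · exact descartesLocalCount_le_of_not_dvd_gcd hp2 hQ hQ' hg hg' hpG
  · exact descartesLocalCount_le_of_not_dvd_natAbs hp2 hQ hQ' hpM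
end

section
/- There exists an absolute constant C > 0 such that the following holds. Let a, a' ≥ 1 be real numbers, and let f and f' be positive definite real binary quadratic forms with discriminants −4a² and −4a'² respectively (i.e. f(x,y) = αx² + 2βxy + γy² with α > 0 and β² − αγ = −a², and similarly for f'). Then for all real X ≥ 1 and all ε with 0 < ε ≤ 1, the Lebesgue measure of the set {(x,y,x',y') ∈ ℝ⁴ : f(x,y) ≤ X, f'(x',y') ≤ X, |f(x,y) − f'(x',y') − (a − a')| ≤ ε} is at most C·ε·X/(a·a'). (This is the bound on the singular integral I_{χ_{a,a'}} ≪ X/(aa').) -/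
/-!
By Fubini over `(x, y)`, the measure is at most the area `π X / a` of the ellipse `f ≤ X` times
a bound for the `(x', y')`-slices. A slice over `(x, y)` lies in the elliptic annulus
`t - ε ≤ f' ≤ t + ε` with `t = f(x, y) - (a - a')`, of area at most `2 π ε / a'`. Both areas come
from a linear change of variables of determinant `a` taking `f` to `x² + y²`, which turns
ellipses and annuli into discs and round annuli. This gives `C = 2 π²`.
-/

open MeasureTheory Real Set Metric

def binQuad (α β γ : ℝ) (p : ℝ × ℝ) : ℝ :=
  α * p.1 ^ 2 + 2 * β * p.1 * p.2 + γ * p.2 ^ 2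

@[fun_prop]
lemma continuous_binQuad (α β γ : ℝ) : Continuous (binQuad α β γ) := by
  unfold binQuad; fun_prop

lemma binQuad_one_zero_one_re_im (z : ℂ) : binQuad 1 0 1 (z.re, z.im) = ‖z‖ ^ 2 := by
  rw [Complex.sq_norm, Complex.normSq_apply, binQuad]; ring

/-- Completing the square: `α f(x, y) = (α x + β y)² + a² y²`. -/
lemma exists_det_eq_binQuad_comp {a α β γ : ℝ} (hα : 0 < α) (hd : β ^ 2 - α * γ = -a ^ 2) :
    ∃ T : ℝ × ℝ →ₗ[ℝ] ℝ × ℝ, LinearMap.det T = a ∧ ∀ p, binQuad 1 0 1 (T p) = binQuad α β γ p := by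
  set s := √α
  have hs : s ≠ 0 := (sqrt_pos.2 hα).ne'
  have hs2 : s ^ 2 = α := sq_sqrt hα.le
  refine ⟨Matrix.toLin (Module.Basis.finTwoProd ℝ) (Module.Basis.finTwoProd ℝ)
    !![s, β / s; 0, a / s], ?_, fun p => ?_⟩
  · rw [LinearMap.det_toLin, Matrix.det_fin_two_of]
    field_simp
    ring
  · rw [Matrix.toLin_finTwoProd_apply, binQuad, binQuad]
    field_simp
    linear_combination (p.1 ^ 2 * s ^ 2 - γ * p.2 ^ 2) * hs2 + p.2 ^ 2 * hd

lemma binQuad_nonneg {a α β γ : ℝ} (hα : 0 < α) (hd : β ^ 2 - α * γ = -a ^ 2) (p : ℝ × ℝ) :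
    0 ≤ binQuad α β γ p := by
  obtain ⟨T, -, hT⟩ := exists_det_eq_binQuad_comp hα hd
  rw [← hT, binQuad]
  ring_nf
  positivity

lemma Complex.volume_setOf_sq_norm_mem_Icc_le {c d : ℝ} (hcd : c ≤ d) :
    volume {z : ℂ | ‖z‖ ^ 2 ∈ Icc c d} ≤ ENNReal.ofReal (π * (d - c)) := by
  have hsub : {z : ℂ | ‖z‖ ^ 2 ∈ Icc c d} ⊆ closedBall 0 √d \ ball 0 √c := by
    rintro z ⟨hcz, hzd⟩
    simp only [mem_sdiff, mem_closedBall_zero_iff, mem_ball_zero_iff, not_lt]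
    exact ⟨le_sqrt_of_sq_le hzd, not_lt.1 ((lt_sqrt (norm_nonneg z)).not.2 hcz.not_gt)⟩
  have hball : ball (0 : ℂ) √c ⊆ closedBall 0 √d :=
    ball_subset_closedBall.trans (closedBall_subset_closedBall (sqrt_le_sqrt hcd))
  have hvol (u : ℝ) : ENNReal.ofReal √u ^ 2 * NNReal.pi = ENNReal.ofReal (π * max u 0) := by
    rw [← ENNReal.ofReal_pow (sqrt_nonneg u), sq_sqrt', ← ENNReal.ofReal_coe_nnreal,
      NNReal.coe_real_pi, ← ENNReal.ofReal_mul (le_max_right u 0), mul_comm]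
  calc volume {z : ℂ | ‖z‖ ^ 2 ∈ Icc c d}
      ≤ volume (closedBall (0 : ℂ) √d \ ball 0 √c) := measure_mono hsub
    _ = ENNReal.ofReal (π * (max d 0 - max c 0)) := by
        rw [measure_sdiff hball measurableSet_ball.nullMeasurableSet measure_ball_lt_top.ne,
          Complex.volume_closedBall, Complex.volume_ball, hvol, hvol,
          ← ENNReal.ofReal_sub _ (by positivity), mul_sub]
    _ ≤ ENNReal.ofReal (π * (d - c)) := by
        gcongr ENNReal.ofReal (π * ?_)
        rcases le_total c 0 with hc | hc <;> rcases le_total d 0 with hd | hd <;>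
          simp only [max_eq_left, max_eq_right, hc, hd] <;> linarith

lemma volume_binQuad_preimage {a α β γ : ℝ} (hα : 0 < α) (hd : β ^ 2 - α * γ = -a ^ 2)
    (ha : a ≠ 0) (s : Set ℝ) :
    volume (binQuad α β γ ⁻¹' s) = ENNReal.ofReal |a|⁻¹ * volume {z : ℂ | ‖z‖ ^ 2 ∈ s} := by
  obtain ⟨T, hdet, hT⟩ := exists_det_eq_binQuad_comp hα hd
  have hpre : binQuad α β γ ⁻¹' s = T ⁻¹' (binQuad 1 0 1 ⁻¹' s) := by
    ext p; simp [hT]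
  have hcomplex : Complex.measurableEquivRealProd ⁻¹' (binQuad 1 0 1 ⁻¹' s)
      = {z : ℂ | ‖z‖ ^ 2 ∈ s} := by
    ext z; simp [binQuad_one_zero_one_re_im]
  rw [hpre, Measure.addHaar_preimage_linearMap volume (hdet ▸ ha), hdet, abs_inv,
    ← Complex.volume_preserving_equiv_real_prod.measure_preimage_equiv, hcomplex]

lemma volume_binQuad_mem_Icc_le {a α β γ : ℝ} (hα : 0 < α) (hd : β ^ 2 - α * γ = -a ^ 2)
    (ha : a ≠ 0) {c d : ℝ} (hcd : c ≤ d) :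
    volume (binQuad α β γ ⁻¹' Icc c d) ≤ ENNReal.ofReal (π * (d - c) / |a|) := by
  rw [volume_binQuad_preimage hα hd ha, div_eq_inv_mul,
    ENNReal.ofReal_mul (inv_nonneg.2 (abs_nonneg a))]
  gcongr
  exact Complex.volume_setOf_sq_norm_mem_Icc_le hcd

lemma volume_setOf_binQuad_le_le {a α β γ : ℝ} (hα : 0 < α) (hd : β ^ 2 - α * γ = -a ^ 2)
    (ha : a ≠ 0) {u : ℝ} (hu : 0 ≤ u) :
    volume {p | binQuad α β γ p ≤ u} ≤ ENNReal.ofReal (π * u / |a|) := by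
  have hIic : {p | binQuad α β γ p ≤ u} = binQuad α β γ ⁻¹' Icc 0 u := by
    ext p; simp [binQuad_nonneg hα hd p]
  simpa [hIic] using volume_binQuad_mem_Icc_le hα hd ha hu

lemma measure_prod_le_mul_of_forall_slice_le {X Y : Type*} [MeasurableSpace X]
    [MeasurableSpace Y] {μ : Measure X} {ν : Measure Y} [SFinite ν] {s : Set (X × Y)}
    (hs : MeasurableSet s) {E : Set X} (hE : MeasurableSet E) (hsE : ∀ p ∈ s, p.1 ∈ E)
    {K : ENNReal} (hK : ∀ x ∈ E, ν (Prod.mk x ⁻¹' s) ≤ K) :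
    μ.prod ν s ≤ K * μ E := by
  rw [Measure.prod_apply hs, ← lintegral_indicator_const hE]
  refine lintegral_mono fun x => ?_
  by_cases hx : x ∈ E
  · simpa [hx] using hK x hx
  · have : Prod.mk x ⁻¹' s = ∅ := eq_empty_of_forall_notMem fun y hy => hx (hsE _ hy)
    simp [this]

/-- Bound on the singular integral: for positive definite real binary quadratic
forms `f, f'` of discriminants `-4a², -4a'²` (`a, a' ≥ 1`), the Lebesgue
measure of the `ε`-neighborhood of the quadric `f - f' = a - a'` inside the
box `{f ≤ X, f' ≤ X}` is at most `C·ε·X/(a·a')`, with `C` absolute. -/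
theorem singular_integral_upper_bound :
    ∃ C : ℝ, 0 < C ∧
    ∀ a a' : ℝ, 1 ≤ a → 1 ≤ a' →
    ∀ α β γ α' β' γ' : ℝ,
      0 < α → β ^ 2 - α * γ = -a ^ 2 →
      0 < α' → β' ^ 2 - α' * γ' = -a' ^ 2 →
    ∀ X : ℝ, 1 ≤ X → ∀ ε : ℝ, 0 < ε → ε ≤ 1 →
      volume {p : ℝ × ℝ × ℝ × ℝ |
          α * p.1 ^ 2 + 2 * β * p.1 * p.2.1 + γ * p.2.1 ^ 2 ≤ X ∧
          α' * p.2.2.1 ^ 2 + 2 * β' * p.2.2.1 * p.2.2.2 + γ' * p.2.2.2 ^ 2 ≤ X ∧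
          |(α * p.1 ^ 2 + 2 * β * p.1 * p.2.1 + γ * p.2.1 ^ 2) -
            (α' * p.2.2.1 ^ 2 + 2 * β' * p.2.2.1 * p.2.2.2 + γ' * p.2.2.2 ^ 2) -
            (a - a')| ≤ ε} ≤
        ENNReal.ofReal (C * ε * X / (a * a')) := by
  refine ⟨2 * π ^ 2, by positivity,
    fun a a' ha ha' α β γ α' β' γ' hα hd hα' hd' X hX ε hε _ => ?_⟩
  have ha0 : 0 < a := by linarith
  have ha0' : 0 < a' := by linarith
  set f := binQuad α β γ
  set f' := binQuad α' β' γ'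
  let S : Set ((ℝ × ℝ) × (ℝ × ℝ)) :=
    {w | f w.1 ≤ X ∧ f' w.2 ≤ X ∧ |f w.1 - f' w.2 - (a - a')| ≤ ε}
  have hf : Measurable f := (continuous_binQuad α β γ).measurable
  have hS : MeasurableSet S := by measurability
  have hslice (w : ℝ × ℝ) :
      Prod.mk w ⁻¹' S ⊆ f' ⁻¹' Icc (f w - (a - a') - ε) (f w - (a - a') + ε) :=
    fun r ⟨_, _, hr⟩ => by constructor <;> linarith [abs_le.1 hr]
  calc _ = volume S := volume_preserving_prodAssoc.measure_preimage_equiv _ |>.symm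
    _ ≤ ENNReal.ofReal (π * (2 * ε) / a') * volume {w | f w ≤ X} := by
        refine measure_prod_le_mul_of_forall_slice_le hS (measurableSet_le hf measurable_const)
          (fun w hw => hw.1) fun w _ => (measure_mono (hslice w)).trans ?_
        refine (volume_binQuad_mem_Icc_le hα' hd' ha0'.ne' (by linarith)).trans_eq ?_
        rw [abs_of_pos ha0']
        ring_nf
    _ ≤ ENNReal.ofReal (π * (2 * ε) / a') * ENNReal.ofReal (π * X / a) := by
        gcongr
        simpa [abs_of_pos ha0] using volume_setOf_binQuad_le_le hα hd ha0.ne' (by linarith : 0 ≤ X)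
    _ = ENNReal.ofReal (2 * π ^ 2 * ε * X / (a * a')) := by
        rw [← ENNReal.ofReal_mul (by positivity)]
        congr 1
        field_simp
end
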